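/- Let T be an ℕ-graded ring with grading 𝒜 : ℕ → AddSubgroup T, and let A be a right ideal of T whose right annihilator A^r = { t ∈ T | ∀ a ∈ A, a * t = 0 } contains a non-zero element. Then A^r contains a non-zero homogeneous element, i.e. there exist j ∈ ℕ and a non-zero h ∈ 𝒜 j with a * h = 0 for all a ∈ A. -/

import Mathlib

/-!
Choose `t ≠ 0` in the right annihilator with the fewest homogeneous components, and let `t_d` be
its top component. The annihilator is stable under left multiplication by homogeneous elements,
so for homogeneous `x`, `x * t_d = 0` forces `x * t = 0`: otherwise `x * t` would be a nonzero
element of the annihilator with fewer components. Since the top component of `a * t` is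
`a_e * t_d`, peeling off top components of `a` shows that `a * t = 0` implies `a * t_d = 0`.
-/

open DirectSum Finset

namespace DirectSum

section Semiring

variable {ι R σ : Type*} [DecidableEq ι] [Semiring R] [SetLike σ R] [AddSubmonoidClass σ R]
  (𝒜 : ι → σ) [∀ i (x : 𝒜 i), Decidable (x ≠ 0)]

theorem support_decompose_nonempty_iff [Decomposition 𝒜] {x : R} :
    (decompose 𝒜 x).support.Nonempty ↔ x ≠ 0 := by
  rw [Finset.nonempty_iff_ne_empty, Ne, DFinsupp.support_eq_empty]
  exact (decompose 𝒜).injective.ne_iff' (decompose_zero 𝒜)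

theorem support_decompose_mul_subset_of_left_mem [AddMonoid ι] [GradedRing 𝒜] {i d : ι} {a : R}
    (ha : a ∈ 𝒜 i) {b : R} (had : a * decompose 𝒜 b d = 0) :
    (decompose 𝒜 (a * b)).support ⊆ ((decompose 𝒜 b).support.erase d).image (i + ·) := by
  intro n hn
  lift a to 𝒜 i using ha
  rw [DFinsupp.mem_support_iff, Ne, ← ZeroMemClass.coe_eq_zero, decompose_mul, decompose_coe,
    coe_mul_apply] at hn
  obtain ⟨⟨i', j⟩, hij, hne⟩ := Finset.exists_ne_zero_of_sum_ne_zero hn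
  simp only [mem_filter, mem_product] at hij
  obtain ⟨⟨hi', hj⟩, rfl⟩ := hij
  obtain rfl : i' = i := Finset.mem_singleton.mp (DFinsupp.support_single_subset hi')
  rw [of_eq_same] at hne
  exact mem_image.mpr ⟨j, mem_erase.mpr ⟨by rintro rfl; exact hne had, hj⟩, rfl⟩

theorem card_support_decompose_mul_lt_of_left_mem [AddMonoid ι] [GradedRing 𝒜] {i d : ι}
    {a : R} (ha : a ∈ 𝒜 i) {b : R} (hd : d ∈ (decompose 𝒜 b).support)
    (had : a * decompose 𝒜 b d = 0) :
    #(decompose 𝒜 (a * b)).support < #(decompose 𝒜 b).support :=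
  calc #(decompose 𝒜 (a * b)).support
      _ ≤ #((decompose 𝒜 b).support.erase d) :=
        (card_le_card (support_decompose_mul_subset_of_left_mem 𝒜 ha had)).trans card_image_le
      _ < #(decompose 𝒜 b).support := card_erase_lt_of_mem hd

theorem coe_decompose_mul_add_of_forall_le [AddCommMonoid ι] [PartialOrder ι]
    [IsOrderedCancelAddMonoid ι] [GradedRing 𝒜] {a b : R} {e d : ι}
    (he : ∀ i ∈ (decompose 𝒜 a).support, i ≤ e) (hd : ∀ j ∈ (decompose 𝒜 b).support, j ≤ d) :
    (decompose 𝒜 (a * b) (e + d) : R) = decompose 𝒜 a e * decompose 𝒜 b d := by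
  rw [decompose_mul, coe_mul_apply]
  refine Finset.sum_eq_single (e, d) (fun ⟨i, j⟩ hij hne ↦ ?_) fun hed ↦ ?_
  · simp only [mem_filter, mem_product] at hij
    obtain ⟨⟨hi, hj⟩, hsum⟩ := hij
    exact absurd ((add_eq_add_iff_eq_and_eq (he i hi) (hd j hj)).mp hsum)
      (by simpa [Prod.ext_iff] using hne)
  · simp only [mem_filter, mem_product, and_true, not_and_or, DFinsupp.notMem_support_iff] at hed
    rcases hed with h | h <;> simp [h]

end Semiring

theorem support_decompose_sub_coe_decompose {ι R σ : Type*} [DecidableEq ι] [AddCommGroup R]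
    [SetLike σ R] [AddSubgroupClass σ R] (𝒜 : ι → σ) [∀ i (x : 𝒜 i), Decidable (x ≠ 0)]
    [Decomposition 𝒜] (a : R) (e : ι) :
    (decompose 𝒜 (a - decompose 𝒜 a e)).support = (decompose 𝒜 a).support.erase e := by
  rw [decompose_sub, decompose_coe, ← DFinsupp.support_erase]
  congr 1
  rw [sub_eq_iff_eq_add']
  exact (DFinsupp.single_add_erase e _).symm

theorem mul_coe_decompose_eq_zero_of_minimalFor {ι R σ : Type*} [DecidableEq ι] [AddCommMonoid ι]
    [LinearOrder ι] [IsOrderedCancelAddMonoid ι] [Ring R] [SetLike σ R] [AddSubgroupClass σ R]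
    (𝒜 : ι → σ) [∀ i (x : 𝒜 i), Decidable (x ≠ 0)] [GradedRing 𝒜] {S : Set R}
    (hS : ∀ i, ∀ x ∈ 𝒜 i, ∀ s ∈ S, x * s ∈ S) {t : R}
    (ht : MinimalFor (fun s ↦ s ∈ S ∧ s ≠ 0) (fun s ↦ #(decompose 𝒜 s).support) t) {d : ι}
    (hd : IsGreatest ↑(decompose 𝒜 t).support d) {a : R} (hat : a * t = 0) :
    a * decompose 𝒜 t d = 0 := by
  induction hcard : #(decompose 𝒜 a).support using Nat.strong_induction_on generalizing a with
  | _ n ih =>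
  obtain rfl | ha0 := eq_or_ne a 0
  · exact zero_mul _
  have he := isGreatest_max' _ ((support_decompose_nonempty_iff 𝒜).mpr ha0)
  set e := (decompose 𝒜 a).support.max' _
  have htop : (decompose 𝒜 a e : R) * decompose 𝒜 t d = 0 := by
    rw [← coe_decompose_mul_add_of_forall_le 𝒜 he.2 hd.2, hat, decompose_zero, zero_apply,
      ZeroMemClass.coe_zero]
  have hkill : (decompose 𝒜 a e : R) * t = 0 := by
    by_contra hne
    have hlt := card_support_decompose_mul_lt_of_left_mem 𝒜 (SetLike.coe_mem _) hd.1 htop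
    exact (hlt.trans_le (ht.le_of_le ⟨hS _ _ (SetLike.coe_mem _) _ ht.1.1, hne⟩ hlt.le)).false
  have hrest : (a - decompose 𝒜 a e) * decompose 𝒜 t d = 0 := by
    refine ih _ ?_ (by rw [sub_mul, hat, hkill, sub_zero]) rfl
    rw [← hcard, support_decompose_sub_coe_decompose]
    exact card_erase_lt_of_mem he.1
  rwa [sub_mul, htop, sub_zero] at hrest

end DirectSum

theorem exists_homogeneous_annihilator_of_nGraded
    {T : Type*} [Ring T] (𝒜 : ℕ → AddSubgroup T) [GradedRing 𝒜]
    (A : AddSubgroup T) (hA : ∀ a ∈ A, ∀ t : T, a * t ∈ A)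
    (hann : ∃ t : T, t ≠ 0 ∧ ∀ a ∈ A, a * t = 0) :
    ∃ (j : ℕ) (h : T), h ∈ 𝒜 j ∧ h ≠ 0 ∧ ∀ a ∈ A, a * h = 0 := by
  classical
  set S : Set T := {s | ∀ a ∈ A, a * s = 0}
  have hS : ∀ i, ∀ x ∈ 𝒜 i, ∀ s ∈ S, x * s ∈ S := fun _ x _ s hs a ha ↦ by
    rw [← mul_assoc]
    exact hs _ (hA a ha x)
  obtain ⟨t, ht⟩ := exists_minimalFor_of_wellFoundedLT (fun s ↦ s ∈ S ∧ s ≠ 0)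
    (fun s ↦ #(decompose 𝒜 s).support) (hann.imp fun _ ⟨h0, h⟩ ↦ ⟨h, h0⟩)
  have hd := isGreatest_max' _ ((support_decompose_nonempty_iff 𝒜).mpr ht.1.2)
  exact ⟨_, _, SetLike.coe_mem _, (GradedRing.mem_support_iff 𝒜 t _).mp hd.1,
    fun a ha ↦ mul_coe_decompose_eq_zero_of_minimalFor 𝒜 hS ht hd (ht.1.1 a ha)⟩
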